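/- arXiv:2307.13556 — 4 statements merged into one kernel-verified Lean document; each statement's English description precedes it below -/
import Mathlib

section
/- Let a be a real number with −1/2 < a ≤ 0, let ρ(s) = √(1/2 − a·cos(2s)), and let φ(s) = √(1/4 − a²) · ∫₀ˢ dt / ((1/2 − a·cos(2t))·√(1/2 + a·cos(2t))). Define Φ : ℝ² → ℝ⁴ by Φ(s, θ) = ( ρ(s)·cos φ(s), ρ(s)·sin φ(s), √(1 − ρ(s)²)·cos θ, √(1 − ρ(s)²)·sin θ ). Then for all (s, θ) ∈ ℝ²: (i) ‖Φ(s, θ)‖ = 1, i.e. Φ maps into the unit sphere S³ ⊂ ℝ⁴; (ii) ‖∂ₛΦ(s, θ)‖² = 1; (iii) ⟨∂ₛΦ(s, θ), ∂_θΦ(s, θ)⟩ = 0; (iv) ‖∂_θΦ(s, θ)‖² = 1 − ρ(s)². -/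
/-!
Write `G = ρ² = 1/2 − a cos 2s` and `H = 1 − ρ² = 1/2 + a cos 2s`, so that `G + H = 1` and
`G H = 1/4 − a² cos² 2s`. The map is `(ρ e^{iφ}, √H e^{iθ})`, which lies on `S³` because
`G + H = 1`. Moving `θ` only rotates the second plane, where the `s`-derivative is radial, so
the coordinate curves are orthogonal and `|∂_θΦ|² = H`. Finally
`|∂ₛΦ|² = ρ'² + ρ²φ'² + (√H)'² = a² sin² 2s (1/G + 1/H) + (1/4 − a²)/(G H)
  = (1/4 − a² cos² 2s)/(G H) = 1`.
-/

open Real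

/-- Profile function of the do Carmo–Dajczer rotational minimal annuli. -/
noncomputable def dcdRho (a s : ℝ) : ℝ := Real.sqrt (1/2 - a * Real.cos (2*s))

/-- Angle function of the do Carmo–Dajczer parametrization. -/
noncomputable def dcdPhiAngle (a s : ℝ) : ℝ :=
  Real.sqrt (1/4 - a^2) *
    ∫ t in (0:ℝ)..s,
      1 / ((1/2 - a * Real.cos (2*t)) * Real.sqrt (1/2 + a * Real.cos (2*t)))

/-- The do Carmo–Dajczer parametrization `Φ : ℝ² → ℝ⁴`. -/
noncomputable def dcdPhi (a s θ : ℝ) : EuclideanSpace ℝ (Fin 4) :=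
  WithLp.toLp 2 ![dcdRho a s * Real.cos (dcdPhiAngle a s),
    dcdRho a s * Real.sin (dcdPhiAngle a s),
    Real.sqrt (1 - (dcdRho a s)^2) * Real.cos θ,
    Real.sqrt (1 - (dcdRho a s)^2) * Real.sin θ]

theorem HasDerivAt.toLp {𝕜 ι : Type*} [NontriviallyNormedField 𝕜] [Fintype ι] (p : ENNReal)
    [Fact (1 ≤ p)] {E : ι → Type*} [∀ i, NormedAddCommGroup (E i)] [∀ i, NormedSpace 𝕜 (E i)]
    {f : 𝕜 → ∀ i, E i} {f' : ∀ i, E i} {x : 𝕜} (h : HasDerivAt f f' x) :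
    HasDerivAt (fun t => WithLp.toLp p (f t)) (WithLp.toLp p f') x :=
  (PiLp.hasFDerivAt_toLp p (f x)).comp_hasDerivAt x h

theorem EuclideanSpace.norm_sq_toLp_fin_four (x₀ x₁ x₂ x₃ : ℝ) :
    ‖(WithLp.toLp 2 ![x₀, x₁, x₂, x₃] : EuclideanSpace ℝ (Fin 4))‖ ^ 2 =
      x₀ ^ 2 + x₁ ^ 2 + x₂ ^ 2 + x₃ ^ 2 := by
  simp [EuclideanSpace.real_norm_sq_eq, Fin.sum_univ_four]

theorem EuclideanSpace.inner_toLp_fin_four (x₀ x₁ x₂ x₃ y₀ y₁ y₂ y₃ : ℝ) :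
    inner ℝ (WithLp.toLp 2 ![x₀, x₁, x₂, x₃] : EuclideanSpace ℝ (Fin 4))
      (WithLp.toLp 2 ![y₀, y₁, y₂, y₃]) = x₀ * y₀ + x₁ * y₁ + x₂ * y₂ + x₃ * y₃ := by
  simp only [PiLp.inner_apply, RCLike.inner_apply, ringHom_apply, Fin.sum_univ_four, Fin.isValue,
    Matrix.cons_val_zero, Matrix.cons_val_one, Matrix.cons_val]
  ring

theorem hasDerivAt_vec_four {f₀ f₁ f₂ f₃ : ℝ → ℝ} {y₀ y₁ y₂ y₃ x : ℝ}
    (h₀ : HasDerivAt f₀ y₀ x) (h₁ : HasDerivAt f₁ y₁ x) (h₂ : HasDerivAt f₂ y₂ x)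
    (h₃ : HasDerivAt f₃ y₃ x) :
    HasDerivAt (fun t => ![f₀ t, f₁ t, f₂ t, f₃ t]) ![y₀, y₁, y₂, y₃] x :=
  h₀.finCons <| h₁.finCons <| h₂.finCons <| h₃.finCons <|
    (hasDerivAt_const x ![]).congr_deriv (Subsingleton.elim _ _)

noncomputable def doublePolar (ρ φ r θ : ℝ) : EuclideanSpace ℝ (Fin 4) :=
  WithLp.toLp 2 ![ρ * cos φ, ρ * sin φ, r * cos θ, r * sin θ]

theorem norm_sq_doublePolar (ρ φ r θ : ℝ) : ‖doublePolar ρ φ r θ‖ ^ 2 = ρ ^ 2 + r ^ 2 := by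
  rw [doublePolar, EuclideanSpace.norm_sq_toLp_fin_four]
  linear_combination ρ ^ 2 * sin_sq_add_cos_sq φ + r ^ 2 * sin_sq_add_cos_sq θ

section Derivatives

variable {ρ φ r : ℝ → ℝ} {ρ' φ' r' s : ℝ}

theorem hasDerivAt_doublePolar (hρ : HasDerivAt ρ ρ' s) (hφ : HasDerivAt φ φ' s)
    (hr : HasDerivAt r r' s) (θ : ℝ) :
    HasDerivAt (fun t => doublePolar (ρ t) (φ t) (r t) θ)
      (WithLp.toLp 2 ![ρ' * cos (φ s) - ρ s * φ' * sin (φ s),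
        ρ' * sin (φ s) + ρ s * φ' * cos (φ s), r' * cos θ, r' * sin θ]) s := by
  refine (hasDerivAt_vec_four (hρ.mul hφ.cos) (hρ.mul hφ.sin) (hr.mul_const _)
    (hr.mul_const _)).toLp 2 |>.congr_deriv ?_
  congr 1
  simp only [Matrix.vecCons_inj, and_true]
  constructor <;> ring

theorem norm_sq_doublePolar_deriv_fst (ρ φ ρ' φ' r' θ : ℝ) :
    ‖(WithLp.toLp 2 ![ρ' * cos φ - ρ * φ' * sin φ, ρ' * sin φ + ρ * φ' * cos φ,
        r' * cos θ, r' * sin θ] : EuclideanSpace ℝ (Fin 4))‖ ^ 2 =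
      ρ' ^ 2 + ρ ^ 2 * φ' ^ 2 + r' ^ 2 := by
  rw [EuclideanSpace.norm_sq_toLp_fin_four]
  linear_combination
    (ρ' ^ 2 + ρ ^ 2 * φ' ^ 2) * sin_sq_add_cos_sq φ + r' ^ 2 * sin_sq_add_cos_sq θ

end Derivatives

theorem hasDerivAt_doublePolar_angle (ρ φ r θ : ℝ) :
    HasDerivAt (doublePolar ρ φ r)
      (WithLp.toLp 2 ![0, 0, -(r * sin θ), r * cos θ]) θ := by
  refine (hasDerivAt_vec_four (hasDerivAt_const θ _) (hasDerivAt_const θ _)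
    ((hasDerivAt_cos θ).const_mul r) ((hasDerivAt_sin θ).const_mul r)).toLp 2 |>.congr_deriv ?_
  simp

theorem norm_sq_doublePolar_deriv_angle (r θ : ℝ) :
    ‖(WithLp.toLp 2 ![0, 0, -(r * sin θ), r * cos θ] : EuclideanSpace ℝ (Fin 4))‖ ^ 2 = r ^ 2 := by
  rw [EuclideanSpace.norm_sq_toLp_fin_four]
  linear_combination r ^ 2 * sin_sq_add_cos_sq θ

theorem inner_doublePolar_deriv_fst_angle (ρ φ r ρ' φ' r' θ : ℝ) :
    inner ℝ (WithLp.toLp 2 ![ρ' * cos φ - ρ * φ' * sin φ, ρ' * sin φ + ρ * φ' * cos φ,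
        r' * cos θ, r' * sin θ] : EuclideanSpace ℝ (Fin 4))
      (WithLp.toLp 2 ![0, 0, -(r * sin θ), r * cos θ]) = 0 := by
  rw [EuclideanSpace.inner_toLp_fin_four]
  ring

section DoCarmoDajczer

variable {a : ℝ}

theorem half_add_mul_cos_pos (ha : |a| < 1 / 2) (x : ℝ) : 0 < 1 / 2 + a * cos x := by
  have h : |a * cos x| ≤ |a| := by
    rw [abs_mul]
    exact mul_le_of_le_one_right (abs_nonneg a) (abs_cos_le_one x)
  linarith [neg_abs_le (a * cos x)]

theorem half_sub_mul_cos_pos (ha : |a| < 1 / 2) (x : ℝ) : 0 < 1 / 2 - a * cos x := by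
  linarith [half_add_mul_cos_pos (a := -a) (by rwa [abs_neg]) x]

theorem hasDerivAt_sqrt_half_add_mul_cos_two_mul (ha : |a| < 1 / 2) (s : ℝ) :
    HasDerivAt (fun t => √(1 / 2 + a * cos (2 * t)))
      (-(a * sin (2 * s)) / √(1 / 2 + a * cos (2 * s))) s := by
  have hcos : HasDerivAt (fun t => 1 / 2 + a * cos (2 * t)) (-(a * sin (2 * s)) * 2) s := by
    have := ((hasDerivAt_cos (2 * s)).comp s ((hasDerivAt_id s).const_mul 2)).const_mul a
    simpa using (this.const_add (1 / 2)).congr_deriv (by ring)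
  refine (hcos.sqrt (half_add_mul_cos_pos ha _).ne').congr_deriv ?_
  field_simp

theorem dcdRho_sq (ha : |a| < 1 / 2) (s : ℝ) : dcdRho a s ^ 2 = 1 / 2 - a * cos (2 * s) := by
  rw [dcdRho, sq_sqrt (half_sub_mul_cos_pos ha _).le]

theorem one_sub_dcdRho_sq (ha : |a| < 1 / 2) (s : ℝ) :
    1 - dcdRho a s ^ 2 = 1 / 2 + a * cos (2 * s) := by
  rw [dcdRho_sq ha]
  ring

theorem hasDerivAt_dcdRho (ha : |a| < 1 / 2) (s : ℝ) :
    HasDerivAt (dcdRho a) (a * sin (2 * s) / dcdRho a s) s := by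
  have h := hasDerivAt_sqrt_half_add_mul_cos_two_mul (a := -a) (by rwa [abs_neg]) s
  simp only [neg_mul, neg_neg, ← sub_eq_add_neg] at h
  exact h

theorem hasDerivAt_dcdPhiAngle (ha : |a| < 1 / 2) (s : ℝ) :
    HasDerivAt (dcdPhiAngle a)
      (√(1 / 4 - a ^ 2) / ((1 / 2 - a * cos (2 * s)) * √(1 / 2 + a * cos (2 * s)))) s := by
  have hcont : Continuous fun t => 1 / ((1 / 2 - a * cos (2 * t)) * √(1 / 2 + a * cos (2 * t))) :=
    continuous_const.div (by fun_prop) fun t =>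
      mul_ne_zero (half_sub_mul_cos_pos ha _).ne' (sqrt_pos.2 (half_add_mul_cos_pos ha _)).ne'
  exact ((hcont.integral_hasStrictDerivAt 0 s).hasDerivAt.const_mul _).congr_deriv (mul_one_div _ _)

theorem dcdPhi_eq_doublePolar (ha : |a| < 1 / 2) (s θ : ℝ) :
    dcdPhi a s θ =
      doublePolar (dcdRho a s) (dcdPhiAngle a s) √(1 / 2 + a * cos (2 * s)) θ := by
  rw [dcdPhi, one_sub_dcdRho_sq ha]
  rfl

theorem dcd_speed_sq_eq_one (ha : |a| < 1 / 2) (s : ℝ) :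
    (a * sin (2 * s) / dcdRho a s) ^ 2 +
      dcdRho a s ^ 2 * (√(1 / 4 - a ^ 2) /
        ((1 / 2 - a * cos (2 * s)) * √(1 / 2 + a * cos (2 * s)))) ^ 2 +
      (-(a * sin (2 * s)) / √(1 / 2 + a * cos (2 * s))) ^ 2 = 1 := by
  have hG := half_sub_mul_cos_pos ha (2 * s)
  have hH := half_add_mul_cos_pos ha (2 * s)
  have hk : 0 ≤ 1 / 4 - a ^ 2 := by nlinarith [abs_nonneg a, sq_abs a]
  simp only [div_pow, mul_pow, neg_sq, dcdRho_sq ha, sq_sqrt hk, sq_sqrt hH.le]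
  have hsum : (1 / 2 - a * cos (2 * s)) + (1 / 2 + a * cos (2 * s)) = 1 := by ring
  have hprod : (1 / 2 - a * cos (2 * s)) * (1 / 2 + a * cos (2 * s)) =
      1 / 4 - a ^ 2 * cos (2 * s) ^ 2 := by ring
  generalize 1 / 2 - a * cos (2 * s) = G at *
  generalize 1 / 2 + a * cos (2 * s) = H at *
  field_simp
  linear_combination 4 * a ^ 2 * sin (2 * s) ^ 2 * hsum - 4 * hprod +
    4 * a ^ 2 * sin_sq_add_cos_sq (2 * s)

theorem norm_dcdPhi (ha : |a| < 1 / 2) (s θ : ℝ) : ‖dcdPhi a s θ‖ = 1 := by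
  rw [← pow_eq_one_iff_of_nonneg (norm_nonneg _) two_ne_zero, dcdPhi_eq_doublePolar ha,
    norm_sq_doublePolar, sq_sqrt (half_add_mul_cos_pos ha _).le, dcdRho_sq ha]
  ring

end DoCarmoDajczer

/-- `Φ` maps into the unit sphere `S³` and the induced metric is
`ds² + (1 − ρ(s)²)dθ²`. -/
theorem stmt5 (a : ℝ) (ha : -(1/2) < a) (ha' : a ≤ 0) (s θ : ℝ) :
    ‖dcdPhi a s θ‖ = 1 ∧
    ‖deriv (fun s' : ℝ => dcdPhi a s' θ) s‖^2 = 1 ∧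
    (inner ℝ (deriv (fun s' : ℝ => dcdPhi a s' θ) s)
      (deriv (fun θ' : ℝ => dcdPhi a s θ') θ) : ℝ) = 0 ∧
    ‖deriv (fun θ' : ℝ => dcdPhi a s θ') θ‖^2 = 1 - (dcdRho a s)^2 := by
  have hsmall : |a| < 1 / 2 := abs_lt.2 ⟨ha, by linarith⟩
  refine ⟨norm_dcdPhi hsmall s θ, ?_⟩
  simp only [dcdPhi_eq_doublePolar hsmall]
  rw [(hasDerivAt_doublePolar (hasDerivAt_dcdRho hsmall s) (hasDerivAt_dcdPhiAngle hsmall s)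
      (hasDerivAt_sqrt_half_add_mul_cos_two_mul hsmall s) θ).deriv,
    (hasDerivAt_doublePolar_angle _ _ _ θ).deriv, norm_sq_doublePolar_deriv_fst,
    norm_sq_doublePolar_deriv_angle, inner_doublePolar_deriv_fst_angle,
    sq_sqrt (half_add_mul_cos_pos hsmall _).le, one_sub_dcdRho_sq hsmall]
  exact ⟨dcd_speed_sq_eq_one hsmall s, rfl, rfl⟩
end

section
/- Let a be a real number with −1/2 < a < 1/2. Then the function u₁(s) = √(1/2 + a·cos(2s)) satisfies the ordinary differential equation (1/2 + a·cos(2s))·u''(s) − a·sin(2s)·u'(s) + 2a·cos(2s)·u(s) = 0 for all s ∈ ℝ. -/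
/-!
Writing `f = 1/2 + a cos 2s`, the equation reads `f u'' + (f'/2) u' - (f''/2) u = 0`. This holds for
every `u` with `u² = f`: differentiating `u² = f` twice gives `f' = 2uu'` and `f'' = 2u'² + 2uu''`,
and substituting makes the left side vanish identically. Positivity of `f` makes `√f` smooth.
-/

open Real

theorem ode_of_sq_eq {u f : ℝ → ℝ} {x : ℝ} (hf : ∀ y, u y ^ 2 = f y) (hu : Differentiable ℝ u)
    (hu' : DifferentiableAt ℝ (deriv u) x) :
    f x * deriv (deriv u) x + deriv f x / 2 * deriv u x - deriv (deriv f) x / 2 * u x = 0 := by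
  obtain rfl : (fun y => u y ^ 2) = f := funext hf
  have hf' : deriv (fun y => u y ^ 2) = fun y => 2 * u y * deriv u y := by
    funext y
    simpa using ((hu y).hasDerivAt.fun_pow 2).deriv
  have hf'' : deriv (deriv fun y => u y ^ 2) x =
      2 * (deriv u x * deriv u x + u x * deriv (deriv u) x) := by
    rw [hf']
    simpa [mul_assoc] using (((hu x).hasDerivAt.mul hu'.hasDerivAt).const_mul 2).deriv
  rw [hf'', hf']
  ring

theorem add_mul_cos_pos {a c : ℝ} (ha : |a| < c) (x : ℝ) : 0 < c + a * cos x := by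
  have : |a * cos x| ≤ |a| := by
    rw [abs_mul]
    exact mul_le_of_le_one_right (abs_nonneg a) (abs_cos_le_one x)
  linarith [neg_abs_le (a * cos x)]

theorem deriv_add_mul_cos_two_mul (c a : ℝ) :
    deriv (fun y => c + a * cos (2 * y)) = fun y => -(2 * a * sin (2 * y)) :=
  funext fun y =>
    (((((hasDerivAt_id' y).const_mul 2).cos.const_mul a).const_add c).congr_deriv (by ring)).deriv

theorem deriv_deriv_add_mul_cos_two_mul (c a : ℝ) :
    deriv (deriv fun y => c + a * cos (2 * y)) = fun y => -(4 * a * cos (2 * y)) := by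
  rw [deriv_add_mul_cos_two_mul]
  exact funext fun y =>
    ((((hasDerivAt_id' y).const_mul 2).sin.const_mul (2 * a)).fun_neg.congr_deriv (by ring)).deriv

/-- `u₁(s) = √(1/2 + a·cos 2s)` satisfies the first angular Fourier mode ODE
`(1/2 + a·cos 2s)·u'' − a·sin(2s)·u' + 2a·cos(2s)·u = 0` on `ℝ`. -/
theorem stmt6 (a : ℝ) (ha : -(1/2) < a) (ha' : a < 1/2) (s : ℝ) :
    (1/2 + a * Real.cos (2*s)) *
        deriv (deriv fun s : ℝ => Real.sqrt (1/2 + a * Real.cos (2*s))) s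
      - a * Real.sin (2*s) *
        deriv (fun s : ℝ => Real.sqrt (1/2 + a * Real.cos (2*s))) s
      + 2 * a * Real.cos (2*s) * Real.sqrt (1/2 + a * Real.cos (2*s)) = 0 := by
  have hpos := add_mul_cos_pos (abs_lt.2 ⟨ha, ha'⟩)
  have hsmooth : ContDiff ℝ 2 fun s : ℝ => √(1/2 + a * cos (2*s)) :=
    (by fun_prop : ContDiff ℝ 2 fun s : ℝ => 1/2 + a * cos (2*s)).sqrt fun y => (hpos _).ne'
  have h := ode_of_sq_eq (fun y => sq_sqrt (hpos (2*y)).le) (hsmooth.differentiable two_ne_zero)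
    (hsmooth.differentiable_deriv_two s)
  rw [deriv_deriv_add_mul_cos_two_mul, deriv_add_mul_cos_two_mul] at h
  linear_combination h
end

section
/- Let a be a real number with −1/2 < a < 1/2, and define h(s) = ∫₀ˢ (1/2 + a·cos(2t))^{−3/2} dt. Then the function u₂(s) = √(1/2 + a·cos(2s)) · h(s) satisfies the ordinary differential equation (1/2 + a·cos(2s))·u''(s) − a·sin(2s)·u'(s) + 2a·cos(2s)·u(s) = 0 for all s ∈ ℝ. -/
/-!
Reduction of order. With `f = 1/2 + a cos 2s` the equation is `f u'' + f'/2 u' - f''/2 u = 0`, and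
with `y = √f` it reads `y² u'' + y y' u' - (y'² + y y'') u = 0`. For `u = y H` its left side is
`(y³ H')'`, which vanishes when `H' = y⁻³ = f^(-3/2)`.
-/

open Real

theorem ode_mul_of_hasDerivAt_inv_cube {y y' H : ℝ → ℝ} {y'' s : ℝ}
    (hy : ∀ x, HasDerivAt y (y' x) x) (hy' : HasDerivAt y' y'' s)
    (hH : ∀ x, HasDerivAt H (y x ^ 3)⁻¹ x) (hs : y s ≠ 0) :
    y s ^ 2 * deriv (deriv fun x => y x * H x) s + y s * y' s * deriv (fun x => y x * H x) s
      - (y' s ^ 2 + y s * y'') * (y s * H s) = 0 := by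
  have hu : deriv (fun x => y x * H x) = fun x => y' x * H x + y x * (y x ^ 3)⁻¹ :=
    funext fun x => ((hy x).mul (hH x)).deriv
  have hu' : HasDerivAt (fun x => y' x * H x + y x * (y x ^ 3)⁻¹) _ s :=
    (hy'.mul (hH s)).add ((hy s).mul (((hy s).pow 3).inv (pow_ne_zero 3 hs)))
  simp only [hu, hu'.deriv, Pi.pow_apply]
  field_simp
  ring

theorem ode_sqrt_mul_of_hasDerivAt_rpow {f f' H : ℝ → ℝ} {f'' s : ℝ}
    (hf : ∀ x, HasDerivAt f (f' x) x) (hf' : HasDerivAt f' f'' s) (hpos : ∀ x, 0 < f x)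
    (hH : ∀ x, HasDerivAt H (f x ^ (-(3 / 2) : ℝ)) x) :
    f s * deriv (deriv fun x => √(f x) * H x) s + f' s / 2 * deriv (fun x => √(f x) * H x) s
      - f'' / 2 * (√(f s) * H s) = 0 := by
  have hy : ∀ x, HasDerivAt (fun x => √(f x)) (f' x / (2 * √(f x))) x :=
    fun x => (hf x).sqrt (hpos x).ne'
  have hsqrt : 0 < √(f s) := sqrt_pos.mpr (hpos s)
  have hy' := hf'.fun_div ((hy s).const_mul 2) (by positivity)
  have hH' : ∀ x, HasDerivAt H (√(f x) ^ 3)⁻¹ x := fun x => by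
    have h := rpow_div_two_eq_sqrt (-3) (hpos x).le
    rw [rpow_neg (sqrt_nonneg _), show (3 : ℝ) = (3 : ℕ) by norm_num, rpow_natCast] at h
    rw [← h]
    convert hH x using 2
    norm_num
  have hode := ode_mul_of_hasDerivAt_inv_cube hy hy' hH' hsqrt.ne'
  have hsq : √(f s) ^ 2 = f s := sq_sqrt (hpos s).le
  have hcoef₁ : √(f s) * (f' s / (2 * √(f s))) = f' s / 2 := by
    field_simp
  have hcoef₂ : (f' s / (2 * √(f s))) ^ 2 + √(f s) *
      ((f'' * (2 * √(f s)) - f' s * (2 * (f' s / (2 * √(f s))))) / (2 * √(f s)) ^ 2)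
      = f'' / 2 := by
    field_simp
    ring
  rwa [hsq, hcoef₁, hcoef₂] at hode

/-- With `h(s) = ∫₀ˢ (1/2 + a·cos 2t)^(−3/2) dt`, the function
`u₂(s) = √(1/2 + a·cos 2s)·h(s)` satisfies
`(1/2 + a·cos 2s)·u'' − a·sin(2s)·u' + 2a·cos(2s)·u = 0` on `ℝ`. -/
theorem stmt7 (a : ℝ) (ha : -(1/2) < a) (ha' : a < 1/2) (s : ℝ) :
    (1/2 + a * Real.cos (2*s)) *
        deriv (deriv fun s : ℝ => Real.sqrt (1/2 + a * Real.cos (2*s)) *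
          ∫ t in (0:ℝ)..s, (1/2 + a * Real.cos (2*t)) ^ (-(3/2) : ℝ)) s
      - a * Real.sin (2*s) *
        deriv (fun s : ℝ => Real.sqrt (1/2 + a * Real.cos (2*s)) *
          ∫ t in (0:ℝ)..s, (1/2 + a * Real.cos (2*t)) ^ (-(3/2) : ℝ)) s
      + 2 * a * Real.cos (2*s) * (Real.sqrt (1/2 + a * Real.cos (2*s)) *
          ∫ t in (0:ℝ)..s, (1/2 + a * Real.cos (2*t)) ^ (-(3/2) : ℝ)) = 0 := by
  have hlin : ∀ x : ℝ, HasDerivAt (fun x => 2 * x) 2 x := fun x => by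
    simpa using (hasDerivAt_id x).const_mul 2
  have hf : ∀ x, HasDerivAt (fun x => 1/2 + a * cos (2*x)) (-(2 * a * sin (2*x))) x :=
    fun x => (((hlin x).cos.const_mul a).const_add _).congr_deriv (by ring)
  have hf' : HasDerivAt (fun x => -(2 * a * sin (2*x))) (-(4 * a * cos (2*s))) s :=
    (((hlin s).sin.const_mul _).neg).congr_deriv (by ring)
  have hpos : ∀ x, 0 < 1/2 + a * cos (2*x) := fun x => by
    have hcos : |a * cos (2*x)| ≤ |a| := by
      rw [abs_mul]
      exact mul_le_of_le_one_right (abs_nonneg a) (abs_cos_le_one _)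
    linarith [abs_lt.mpr ⟨ha, ha'⟩, neg_abs_le (a * cos (2*x))]
  have hcont : Continuous fun t => (1/2 + a * cos (2*t)) ^ (-(3/2) : ℝ) :=
    (continuous_const.add (continuous_const.mul (continuous_cos.comp
      (continuous_const.mul continuous_id)))).rpow_const fun t => Or.inl (hpos t).ne'
  have hode := ode_sqrt_mul_of_hasDerivAt_rpow hf hf' hpos
    fun x => (hcont.integral_hasStrictDerivAt 0 x).hasDerivAt
  linear_combination hode
end

section
/- Let a be a real number with −1/2 < a ≤ 0, let ρ(s) = √(1/2 − a·cos(2s)), and let φ(s) = √(1/4 − a²) · ∫₀ˢ dt / ((1/2 − a·cos(2t))·√(1/2 + a·cos(2t))). Then the functions b₁(s) = ρ(s)·cos φ(s) and b₂(s) = ρ(s)·sin φ(s) both satisfy the ordinary differential equation b''(s) − (a·sin(2s)/(1/2 + a·cos(2s)))·b'(s) + 2·b(s) = 0 for all s ∈ ℝ. -/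
/-!
For `b = ρ cos (φ + θ)` the equation `b'' - k b' + q b = 0` holds for every phase `θ` as soon as
the amplitude equation `ρ'' - k ρ' + (q - φ'²) ρ = 0` and the phase equation
`(ρ² φ')' = k ρ² φ'` hold; `b₁` and `b₂` are the cases `θ = 0` and `θ = -π/2`. Here
`ρ² = 1/2 - a cos 2s` and `ρ² φ' = √(1/4 - a²) / √(1/2 + a cos 2s)`, so the phase equation is
immediate, and the amplitude equation reduces, using `(1/2 - a cos 2s) + (1/2 + a cos 2s) = 1`,
to `sin² 2s + cos² 2s = 1`.
-/

open Real

theorem ode_mul_cos_add_of_amplitude_phase {ρ ρ' φ φ' : ℝ → ℝ} {ρ'' φ'' k q s : ℝ}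
    (hρ : ∀ x, HasDerivAt ρ (ρ' x) x) (hρ' : HasDerivAt ρ' (ρ'') s)
    (hφ : ∀ x, HasDerivAt φ (φ' x) x) (hφ' : HasDerivAt φ' (φ'') s)
    (hamplitude : ρ'' - k * ρ' s + (q - φ' s ^ 2) * ρ s = 0)
    (hphase : 2 * ρ' s * φ' s + ρ s * φ'' - k * ρ s * φ' s = 0) (θ : ℝ) :
    deriv (deriv fun x => ρ x * cos (φ x + θ)) s
      - k * deriv (fun x => ρ x * cos (φ x + θ)) s + q * (ρ s * cos (φ s + θ)) = 0 := by
  have hψ : ∀ x, HasDerivAt (fun x => φ x + θ) (φ' x) x := fun x => (hφ x).add_const θ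
  have hb : ∀ x, HasDerivAt (fun x => ρ x * cos (φ x + θ))
      (ρ' x * cos (φ x + θ) - ρ x * φ' x * sin (φ x + θ)) x := fun x =>
    ((hρ x).mul (hψ x).cos).congr_deriv (by ring)
  have hb' : HasDerivAt (fun x => ρ' x * cos (φ x + θ) - ρ x * φ' x * sin (φ x + θ))
      (ρ'' * cos (φ s + θ) - ρ' s * φ' s * sin (φ s + θ)
        - ((ρ' s * φ' s + ρ s * φ'') * sin (φ s + θ) + ρ s * φ' s ^ 2 * cos (φ s + θ))) s :=
    ((hρ'.mul (hψ s).cos).sub (((hρ s).mul hφ').mul (hψ s).sin)).congr_deriv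
      (by rw [Pi.mul_apply]; ring)
  rw [funext fun x => (hb x).deriv, hb'.deriv]
  linear_combination cos (φ s + θ) * hamplitude - sin (φ s + θ) * hphase

namespace DoCarmoDajczer

noncomputable def radius (a s : ℝ) : ℝ := √(1/2 - a * cos (2*s))

noncomputable def phase (a s : ℝ) : ℝ :=
  √(1/4 - a^2) * ∫ t in (0:ℝ)..s, 1 / ((1/2 - a * cos (2*t)) * √(1/2 + a * cos (2*t)))

variable {a : ℝ}

lemma half_sub_mul_cos_pos (ha : |a| < 1/2) (x : ℝ) : 0 < 1/2 - a * cos x := by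
  have : |a * cos x| < 1/2 := by
    rw [abs_mul]
    exact (mul_le_of_le_one_right (abs_nonneg a) (abs_cos_le_one x)).trans_lt ha
  linarith [le_abs_self (a * cos x)]

lemma half_add_mul_cos_pos (ha : |a| < 1/2) (x : ℝ) : 0 < 1/2 + a * cos x := by
  simpa using half_sub_mul_cos_pos (a := -a) (by rwa [abs_neg]) x

lemma radius_sq (ha : |a| < 1/2) (s : ℝ) : radius a s ^ 2 = 1/2 - a * cos (2*s) :=
  sq_sqrt (half_sub_mul_cos_pos ha _).le

lemma radius_pos (ha : |a| < 1/2) (s : ℝ) : 0 < radius a s :=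
  sqrt_pos.2 (half_sub_mul_cos_pos ha _)

lemma hasDerivAt_half_sub_mul_cos_two_mul (s : ℝ) :
    HasDerivAt (fun s => 1/2 - a * cos (2*s)) (2 * a * sin (2*s)) s := by
  have h : HasDerivAt (fun s : ℝ => 2*s) 2 s := by simpa using (hasDerivAt_id s).const_mul 2
  exact ((h.cos.const_mul a).const_sub (1/2)).congr_deriv (by ring)

lemma hasDerivAt_radius (ha : |a| < 1/2) (s : ℝ) :
    HasDerivAt (radius a) (a * sin (2*s) / radius a s) s := by
  have hr := (radius_pos ha s).ne'
  refine ((hasDerivAt_sqrt (half_sub_mul_cos_pos ha _).ne').comp s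
    (hasDerivAt_half_sub_mul_cos_two_mul s)).congr_deriv ?_
  unfold radius at hr ⊢
  field_simp

lemma hasDerivAt_half_add_mul_cos_two_mul (s : ℝ) :
    HasDerivAt (fun s => 1/2 + a * cos (2*s)) (-(2 * a * sin (2*s))) s := by
  simpa using hasDerivAt_half_sub_mul_cos_two_mul (a := -a) s

lemma hasDerivAt_deriv_radius (ha : |a| < 1/2) (s : ℝ) :
    HasDerivAt (fun s => a * sin (2*s) / radius a s)
      ((2 * a * cos (2*s) * (1/2 - a * cos (2*s)) - (a * sin (2*s)) ^ 2) / radius a s ^ 3) s := by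
  have h : HasDerivAt (fun s : ℝ => 2*s) 2 s := by simpa using (hasDerivAt_id s).const_mul 2
  have hr := (radius_pos ha s).ne'
  refine ((h.sin.const_mul a).div (hasDerivAt_radius ha s) hr).congr_deriv ?_
  rw [← radius_sq ha]
  field_simp

lemma continuous_phase_integrand (ha : |a| < 1/2) :
    Continuous fun t => 1 / ((1/2 - a * cos (2*t)) * √(1/2 + a * cos (2*t))) :=
  continuous_const.div (by fun_prop) fun t =>
    mul_ne_zero (half_sub_mul_cos_pos ha _).ne' (sqrt_pos.2 (half_add_mul_cos_pos ha _)).ne'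

lemma hasDerivAt_phase (ha : |a| < 1/2) (s : ℝ) :
    HasDerivAt (phase a) (√(1/4 - a^2) / ((1/2 - a * cos (2*s)) * √(1/2 + a * cos (2*s)))) s := by
  have hg := continuous_phase_integrand ha
  exact ((intervalIntegral.integral_hasDerivAt_right (hg.intervalIntegrable 0 s)
    (hg.stronglyMeasurableAtFilter _ _) hg.continuousAt).const_mul _).congr_deriv (mul_one_div _ _)

lemma hasDerivAt_const_div_half_sub_mul_cos_mul_sqrt (ha : |a| < 1/2) (c s : ℝ) :
    HasDerivAt (fun s => c / ((1/2 - a * cos (2*s)) * √(1/2 + a * cos (2*s))))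
      (-(c * a * sin (2*s) * (1/2 + 3 * a * cos (2*s))) /
        ((1/2 - a * cos (2*s)) ^ 2 * (1/2 + a * cos (2*s)) * √(1/2 + a * cos (2*s)))) s := by
  have hQ := half_sub_mul_cos_pos ha (2*s)
  have hP := half_add_mul_cos_pos ha (2*s)
  have hp' := (hasDerivAt_sqrt hP.ne').comp s (hasDerivAt_half_add_mul_cos_two_mul s)
  refine ((hasDerivAt_const s c).div ((hasDerivAt_half_sub_mul_cos_two_mul (a := a) s).mul hp')
    (mul_ne_zero hQ.ne' (sqrt_pos.2 hP).ne')).congr_deriv ?_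
  simp only [Pi.mul_apply, Function.comp_apply]
  have hp := (sqrt_pos.2 hP).ne'
  have hp2 : √(1/2 + a * cos (2*s)) ^ 2 = 1/2 + a * cos (2*s) := sq_sqrt hP.le
  generalize √(1/2 + a * cos (2*s)) = p at hp hp2 ⊢
  rw [← hp2]
  -- `field_simp` sees the denominator `1/2 - a cos 2s` as `(1 - 2 a cos 2s) / 2`
  have hQ' : 1 - 2 * a * cos (2*s) ≠ 0 := by linarith
  field_simp
  linear_combination (-4 * a * c * sin (2*s)) * hp2

theorem ode_radius_mul_cos_phase_add (ha : |a| < 1/2) (θ s : ℝ) :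
    deriv (deriv fun s => radius a s * cos (phase a s + θ)) s
      - (a * sin (2*s) / (1/2 + a * cos (2*s)))
        * deriv (fun s => radius a s * cos (phase a s + θ)) s
      + 2 * (radius a s * cos (phase a s + θ)) = 0 := by
  refine ode_mul_cos_add_of_amplitude_phase (hasDerivAt_radius ha) (hasDerivAt_deriv_radius ha s)
    (hasDerivAt_phase ha) (hasDerivAt_const_div_half_sub_mul_cos_mul_sqrt ha _ s) ?_ ?_ θ
  all_goals
    have hr := radius_pos ha s
    have hr2 := radius_sq ha s
    have hP := half_add_mul_cos_pos ha (2*s)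
    have hp := sqrt_pos.2 hP
    have hp2 : √(1/2 + a * cos (2*s)) ^ 2 = 1/2 + a * cos (2*s) := sq_sqrt hP.le
    have hc2 : √(1/4 - a^2) ^ 2 = 1/4 - a^2 := sq_sqrt (by nlinarith [abs_lt.1 ha])
    have huv := sin_sq_add_cos_sq (2*s)
    generalize radius a s = r at *
    generalize √(1/2 + a * cos (2*s)) = p at *
    generalize √(1/4 - a^2) = c at *
    generalize sin (2*s) = u at *
    generalize cos (2*s) = v at *
    rw [← hr2, ← hp2]
    field_simp
  · linear_combination (2 * a * v * p ^ 2 - a ^ 2 * u ^ 2 + 2 * (r ^ 2 + 1/2 - a * v) * p ^ 2) * hr2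
      + (2 * a * v * (1/2 - a * v) - a ^ 2 * u ^ 2 + 2 * (1/2 - a * v) ^ 2) * hp2 - hc2 - a ^ 2 * huv
  · linear_combination (a * u * c) * (4 * hp2 - 2 * hr2)

end DoCarmoDajczer

/-- The first two coordinates `b₁(s) = ρ(s)·cos φ(s)` and `b₂(s) = ρ(s)·sin φ(s)` of the
do Carmo–Dajczer parametrization satisfy the zeroth Fourier mode ODE
`b'' − (a·sin 2s/(1/2 + a·cos 2s))·b' + 2b = 0` on `ℝ`. -/
theorem stmt10 (a : ℝ) (ha : -(1/2) < a) (ha' : a ≤ 0) :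
    (∀ s : ℝ,
      deriv (deriv fun s : ℝ => Real.sqrt (1/2 - a * Real.cos (2*s)) *
          Real.cos (Real.sqrt (1/4 - a^2) *
            ∫ t in (0:ℝ)..s,
              1 / ((1/2 - a * Real.cos (2*t)) * Real.sqrt (1/2 + a * Real.cos (2*t))))) s
        - (a * Real.sin (2*s) / (1/2 + a * Real.cos (2*s))) *
          deriv (fun s : ℝ => Real.sqrt (1/2 - a * Real.cos (2*s)) *
            Real.cos (Real.sqrt (1/4 - a^2) *
              ∫ t in (0:ℝ)..s,
                1 / ((1/2 - a * Real.cos (2*t)) * Real.sqrt (1/2 + a * Real.cos (2*t))))) s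
        + 2 * (Real.sqrt (1/2 - a * Real.cos (2*s)) *
            Real.cos (Real.sqrt (1/4 - a^2) *
              ∫ t in (0:ℝ)..s,
                1 / ((1/2 - a * Real.cos (2*t)) * Real.sqrt (1/2 + a * Real.cos (2*t)))))
        = 0) ∧
    (∀ s : ℝ,
      deriv (deriv fun s : ℝ => Real.sqrt (1/2 - a * Real.cos (2*s)) *
          Real.sin (Real.sqrt (1/4 - a^2) *
            ∫ t in (0:ℝ)..s,
              1 / ((1/2 - a * Real.cos (2*t)) * Real.sqrt (1/2 + a * Real.cos (2*t))))) s
        - (a * Real.sin (2*s) / (1/2 + a * Real.cos (2*s))) *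
          deriv (fun s : ℝ => Real.sqrt (1/2 - a * Real.cos (2*s)) *
            Real.sin (Real.sqrt (1/4 - a^2) *
              ∫ t in (0:ℝ)..s,
                1 / ((1/2 - a * Real.cos (2*t)) * Real.sqrt (1/2 + a * Real.cos (2*t))))) s
        + 2 * (Real.sqrt (1/2 - a * Real.cos (2*s)) *
            Real.sin (Real.sqrt (1/4 - a^2) *
              ∫ t in (0:ℝ)..s,
                1 / ((1/2 - a * Real.cos (2*t)) * Real.sqrt (1/2 + a * Real.cos (2*t)))))
        = 0) := by
  have hb := fun θ s => DoCarmoDajczer.ode_radius_mul_cos_phase_add (abs_lt.2 ⟨ha, by linarith⟩) θ s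
  simp only [DoCarmoDajczer.radius, DoCarmoDajczer.phase] at hb
  refine ⟨fun s => ?_, fun s => ?_⟩
  · simpa only [add_zero] using hb 0 s
  · simpa only [← sub_eq_add_neg, cos_sub_pi_div_two] using hb (-(π/2)) s
end
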